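/- arXiv:2506.15621 — 2 statements merged into one kernel-verified Lean document; each statement's English description precedes it below -/
import Mathlib

section
/- If v : ℝ₊ → ℝ₊ is a function satisfying the differential inequality v'(r) ≥ C v(r)^{1-1/n} for almost every r in [0, r₀], with v absolutely continuous, v(r) > 0 for r > 0, and v(0) = 0, then v(r) ≥ (Cr/n)^n for all r ∈ [0, r₀]. -/
open Set Filter Topology MeasureTheory

/-- If `v : ℝ₊ → ℝ₊` is absolutely continuous on `[0,r₀]` (expressed by `v(r) = ∫₀^r v'`
with `v'` integrable), `v(0) = 0`, `v > 0` on `(0,r₀]`, and `v'(r) ≥ C v(r)^{1-1/n}` for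
almost every `r ∈ [0,r₀]`, then `v(r) ≥ (Cr/n)ⁿ` for all `r ∈ [0,r₀]`. -/
theorem stmt_7 (n : ℕ) (hn : 1 ≤ n) (C r₀ : ℝ) (hC : 0 < C) (hr₀ : 0 < r₀)
    (v v' : ℝ → ℝ)
    (hint : IntegrableOn v' (Icc 0 r₀))
    (hac : ∀ r ∈ Icc (0:ℝ) r₀, v r = ∫ s in (0:ℝ)..r, v' s)
    (hv0 : v 0 = 0)
    (hpos : ∀ r ∈ Ioc (0:ℝ) r₀, 0 < v r)
    (hode : ∀ᵐ r ∂(volume.restrict (Icc (0:ℝ) r₀)),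
      C * v r ^ (1 - 1/(n:ℝ)) ≤ v' r) :
    ∀ r ∈ Icc (0:ℝ) r₀, (C * r / n) ^ n ≤ v r := by
  have hn0 : (0:ℝ) < (n:ℝ) := by exact_mod_cast Nat.lt_of_lt_of_le Nat.zero_lt_one hn
  set p : ℝ := 1 - 1/(n:ℝ) with hpdef
  have hp0 : 0 ≤ p := by
    have h : 1/(n:ℝ) ≤ 1 := by
      rw [div_le_one hn0]; exact_mod_cast hn
    rw [hpdef]; linarith
  have hp1 : p < 1 := by
    have : 0 < 1/(n:ℝ) := by positivity
    simp only [hpdef]; linarith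
  set A : ℝ := (C / n) ^ n with hAdef
  have hCn : 0 < C / n := by positivity
  have hA0 : 0 < A := by positivity
  -- nonnegativity of v on [0, r₀]
  have hvnn : ∀ s ∈ Icc (0:ℝ) r₀, 0 ≤ v s := by
    intro s hs
    rcases eq_or_lt_of_le hs.1 with h | h
    · rw [← h, hv0]
    · exact (hpos s ⟨h, hs.2⟩).le
  -- continuity of v on [0, r₀]
  have hvc : ContinuousOn v (Icc 0 r₀) := by
    have h1 : ContinuousOn (fun x => ∫ t in (0:ℝ)..x, v' t) (Icc 0 r₀) := by
      have := intervalIntegral.continuousOn_primitive_interval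
        (f := v') (a := 0) (b := r₀) (μ := volume) (by rwa [uIcc_of_le hr₀.le])
      rwa [uIcc_of_le hr₀.le] at this
    exact ContinuousOn.congr h1 hac
  -- interval integrability of v' on subintervals
  have hii : ∀ a b : ℝ, 0 ≤ a → b ≤ r₀ → a ≤ b → IntervalIntegrable v' volume a b := by
    intro a b ha hb hab
    rw [intervalIntegrable_iff_integrableOn_Icc_of_le hab]
    exact hint.mono_set (Icc_subset_Icc ha hb)
  -- the key iteration step
  have step : ∀ δ : ℝ, 0 ≤ δ → δ ≤ r₀ → ∀ a : ℝ, 0 < a →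
      (∀ s ∈ Icc δ r₀, a * (s - δ) ^ n ≤ v s) →
      ∀ s ∈ Icc δ r₀, (C / n * a ^ p) * (s - δ) ^ n ≤ v s := by
    intro δ hδ0 hδr a ha hbase s hs
    have hδs : δ ≤ s := hs.1
    have hsr : s ≤ r₀ := hs.2
    -- v s = v δ + ∫_δ^s v'
    have hsplit : v s = v δ + ∫ t in δ..s, v' t := by
      rw [hac s ⟨hδ0.trans hδs, hsr⟩, hac δ ⟨hδ0, hδr⟩]
      rw [intervalIntegral.integral_add_adjacent_intervals
        (hii 0 δ le_rfl hδr hδ0) (hii δ s hδ0 hsr hδs)]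
    -- pointwise bound inside the integral
    have hptwise : ∀ t ∈ Icc δ s, C * a ^ p * (t - δ) ^ (n - 1) ≤ C * v t ^ p := by
      intro t ht
      have htδ : 0 ≤ t - δ := by linarith [ht.1]
      have h1 : a * (t - δ) ^ n ≤ v t := hbase t ⟨ht.1, ht.2.trans hsr⟩
      have h2 : (a * (t - δ) ^ n) ^ p ≤ v t ^ p :=
        Real.rpow_le_rpow (by positivity) h1 hp0
      have h3 : (a * (t - δ) ^ n) ^ p = a ^ p * (t - δ) ^ (n - 1) := by
        rw [Real.mul_rpow ha.le (by positivity)]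
        congr 1
        rw [← Real.rpow_natCast (t - δ) n, ← Real.rpow_natCast (t - δ) (n - 1),
          ← Real.rpow_mul htδ]
        congr 1
        have : ((n - 1 : ℕ) : ℝ) = (n : ℝ) - 1 := by
          rw [Nat.cast_sub hn]; norm_num
        rw [this, hpdef]
        field_simp
      rw [mul_assoc, ← h3]
      exact mul_le_mul_of_nonneg_left h2 hC.le
    -- integral comparison
    have hint1 : IntervalIntegrable (fun t => C * a ^ p * (t - δ) ^ (n - 1)) volume δ s := by
      exact (Continuous.intervalIntegrable
        (continuous_const.mul ((continuous_id.sub continuous_const).pow _)) δ s)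
    have hkey : (∫ t in δ..s, C * a ^ p * (t - δ) ^ (n - 1)) ≤ ∫ t in δ..s, v' t := by
      apply intervalIntegral.integral_mono_ae_restrict hδs hint1 (hii δ s hδ0 hsr hδs)
      have hsub : Icc δ s ⊆ Icc (0:ℝ) r₀ := Icc_subset_Icc hδ0 hsr
      have hode' : ∀ᵐ t ∂(volume.restrict (Icc δ s)), C * v t ^ p ≤ v' t :=
        ae_restrict_of_ae_restrict_of_subset hsub hode
      filter_upwards [hode', ae_restrict_mem measurableSet_Icc] with t h1 h2
      exact (hptwise t h2).trans h1
    -- compute the left integral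
    have hval : (∫ t in δ..s, C * a ^ p * (t - δ) ^ (n - 1))
        = C * a ^ p * ((s - δ) ^ n / n) := by
      rw [intervalIntegral.integral_const_mul]
      congr 1
      have h1 : (∫ t in δ..s, (t - δ) ^ (n - 1)) = ∫ u in (δ - δ)..(s - δ), u ^ (n - 1) :=
        intervalIntegral.integral_comp_sub_right (fun u => u ^ (n - 1)) δ
      have hnn : n - 1 + 1 = n := Nat.succ_pred_eq_of_pos hn
      rw [h1, sub_self, integral_pow, hnn, zero_pow (by omega : n ≠ 0), sub_zero]
      have hc : ((n - 1 : ℕ) : ℝ) + 1 = (n : ℝ) := by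
        rw [Nat.cast_sub hn]; ring
      rw [hc]
    have hvδ : 0 ≤ v δ := hvnn δ ⟨hδ0, hδr⟩
    have : (C / n * a ^ p) * (s - δ) ^ n = C * a ^ p * ((s - δ) ^ n / n) := by
      ring
    rw [this, hsplit]
    rw [hval] at hkey
    linarith
  -- main estimate with shifted origin δ
  have main : ∀ δ : ℝ, 0 < δ → δ < r₀ → ∀ s ∈ Icc δ r₀, A * (s - δ) ^ n ≤ v s := by
    intro δ hδ0 hδr
    -- minimum of v on [δ, r₀]
    obtain ⟨x, hx, hxmin⟩ := isCompact_Icc.exists_isMinOn (nonempty_Icc.mpr hδr.le)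
      (hvc.mono (Icc_subset_Icc hδ0.le le_rfl))
    have hm : 0 < v x := hpos x ⟨hδ0.trans_le hx.1, hx.2⟩
    set a₀ : ℝ := min (v x / r₀ ^ n) A with ha₀def
    have ha₀ : 0 < a₀ := lt_min (by positivity) hA0
    have ha₀A : a₀ ≤ A := min_le_right _ _
    have base : ∀ s ∈ Icc δ r₀, a₀ * (s - δ) ^ n ≤ v s := by
      intro s hs
      have h1 : (s - δ) ^ n ≤ r₀ ^ n := by
        apply pow_le_pow_left₀ (by linarith [hs.1]) (by linarith [hs.2])
      calc a₀ * (s - δ) ^ n ≤ (v x / r₀ ^ n) * r₀ ^ n := by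
            apply mul_le_mul (min_le_left _ _) h1
              (pow_nonneg (by linarith [hs.1]) n) (by positivity)
        _ = v x := by field_simp
        _ ≤ v s := hxmin hs
    set b : ℝ := a₀ / A with hbdef
    have hb0 : 0 < b := by positivity
    have hb1 : b ≤ 1 := by rw [hbdef, div_le_one hA0]; exact ha₀A
    -- A^p * (C/n) = A
    have hAp : C / n * A ^ p = A := by
      have h1 : (A:ℝ) ^ p = (C / n) ^ ((n:ℝ) * p) := by
        rw [hAdef, ← Real.rpow_natCast (C / n) n, ← Real.rpow_mul hCn.le]
      have h2 : (n:ℝ) * p = (n:ℝ) - 1 := by rw [hpdef]; field_simp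
      calc C / n * A ^ p = (C/n) ^ (1:ℝ) * (C/n) ^ ((n:ℝ) - 1) := by
            rw [h1, h2, Real.rpow_one]
        _ = (C/n) ^ ((1:ℝ) + ((n:ℝ) - 1)) := (Real.rpow_add hCn _ _).symm
        _ = (C/n) ^ ((n:ℕ):ℝ) := by norm_num
        _ = A := by rw [Real.rpow_natCast, hAdef]
    have iter : ∀ k : ℕ, ∀ s ∈ Icc δ r₀, (A * b ^ (p ^ k)) * (s - δ) ^ n ≤ v s := by
      intro k
      induction k with
      | zero =>
        intro s hs
        have h : A * b ^ ((p:ℝ) ^ (0:ℕ)) = a₀ := by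
          rw [pow_zero, Real.rpow_one, hbdef, mul_div_cancel₀ _ hA0.ne']
        rw [h]
        exact base s hs
      | succ k ih =>
        have hpos' : 0 < A * b ^ (p ^ k) := by positivity
        have heq : C / n * (A * b ^ (p ^ k)) ^ p = A * b ^ (p ^ (k + 1)) := by
          rw [Real.mul_rpow hA0.le (Real.rpow_nonneg hb0.le _),
            ← Real.rpow_mul hb0.le, ← pow_succ, ← mul_assoc, hAp]
        intro s hs
        have h2 := step δ hδ0.le hδr.le (A * b ^ (p ^ k)) hpos' ih s hs
        rwa [heq] at h2
    intro s hs
    have hlim : Tendsto (fun k : ℕ => (A * b ^ ((p:ℝ) ^ k)) * (s - δ) ^ n) atTop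
        (𝓝 ((A * 1) * (s - δ) ^ n)) := by
      apply Tendsto.mul_const
      apply Tendsto.const_mul
      have h1 : Tendsto (fun k : ℕ => (p:ℝ) ^ k) atTop (𝓝 0) :=
        tendsto_pow_atTop_nhds_zero_of_lt_one hp0 hp1
      have h2 : ContinuousAt (fun y : ℝ => b ^ y) 0 :=
        Real.continuousAt_const_rpow hb0.ne'
      have := h2.tendsto.comp h1
      rwa [Real.rpow_zero] at this
    have := le_of_tendsto hlim (Eventually.of_forall fun k => iter k s hs)
    linarith [this]
  -- conclude
  intro r hr
  rcases eq_or_lt_of_le hr.1 with h0 | h0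
  · rw [← h0, hv0]
    simp [zero_pow (by omega : n ≠ 0)]
  · have hineq : ∀ δ ∈ Ioo (0:ℝ) r, A * (r - δ) ^ n ≤ v r := by
      intro δ hδ
      exact main δ hδ.1 (hδ.2.trans_le hr.2) r ⟨hδ.2.le, hr.2⟩
    have hlim : Tendsto (fun δ : ℝ => A * (r - δ) ^ n) (𝓝[>] (0:ℝ))
        (𝓝 (A * (r - 0) ^ n)) := by
      apply Tendsto.mono_left _ nhdsWithin_le_nhds
      exact ((continuous_const.mul
        ((continuous_const.sub continuous_id).pow n)).tendsto 0)
    have hmem : Ioo (0:ℝ) r ∈ 𝓝[>] (0:ℝ) :=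
      Ioo_mem_nhdsGT_of_mem ⟨le_refl 0, h0⟩
    have hfin : A * (r - 0) ^ n ≤ v r :=
      le_of_tendsto hlim (Filter.eventually_iff_exists_mem.mpr
        ⟨Ioo 0 r, hmem, fun δ hδ => hineq δ hδ⟩)
    have : (C * r / n) ^ n = A * r ^ n := by
      rw [hAdef, ← mul_pow]
      congr 1
      ring
    rw [this]
    simpa using hfin
end

section
/- Suppose a metric measure space (X,d,μ) satisfies: (a) for every l > n_X and every C > 0 there is η > 0 with Φ(t) ≥ C t^{1-1/l} for 0 ≤ t ≤ η, and (b) there is h > 0 with Φ(t) ≥ h t for all t. Then for every integer l > n_X and every C > 0, there is a continuous function f : ℝ₊ → ℝ₊ with f(t) ≤ Φ(t) for all t, f(t)/t^{1-1/l} → C as t → 0, and f linear (f(t) = h't for some h' > 0) for t large enough. -/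
open Set Filter Topology

/-- If the isoperimetric profile `Φ` of a space with isoperimetric dimension `n_X`
satisfies (a) for all `l > n_X` and `C > 0` an estimate `Φ(t) ≥ C t^{1-1/l}` for small
`t`, and (b) a linear lower bound `Φ(t) ≥ h t` (nonzero Cheeger constant), then for every
integer `l > n_X` and `C > 0` there is a continuous `f : ℝ₊ → ℝ₊` with `f ≤ Φ`,
`f(t)/t^{1-1/l} → C` at `0⁺`, and `f` linear for large `t`. -/
theorem stmt_18 (Φ : ℝ → ℝ) (nX : ℝ) (hnX : 1 ≤ nX)
    (ha : ∀ l : ℕ, nX < l → ∀ C > (0:ℝ), ∃ η > (0:ℝ),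
      ∀ t, 0 ≤ t → t ≤ η → C * t ^ (1 - 1/(l:ℝ)) ≤ Φ t)
    (hb : ∃ h > (0:ℝ), ∀ t ≥ (0:ℝ), h * t ≤ Φ t) :
    ∀ l : ℕ, nX < l → ∀ C > (0:ℝ), ∃ f : ℝ → ℝ,
      ContinuousOn f (Ici 0) ∧
      (∀ t ≥ (0:ℝ), 0 ≤ f t) ∧
      (∀ t ≥ (0:ℝ), f t ≤ Φ t) ∧
      Tendsto (fun t => f t / t ^ (1 - 1/(l:ℝ))) (𝓝[>] 0) (𝓝 C) ∧
      ∃ h' > (0:ℝ), ∃ t₁ > (0:ℝ), ∀ t ≥ t₁, f t = h' * t := by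
  obtain ⟨h, hh, hhb⟩ := hb
  intro l hl C hC
  obtain ⟨η, hη, hΦa⟩ := ha l hl C hC
  set α : ℝ := 1 - 1/(l:ℝ) with hαdef
  have hl1 : (1:ℝ) < l := lt_of_le_of_lt hnX hl
  have hl0 : (0:ℝ) < l := by linarith
  have hinv : 0 < 1/(l:ℝ) := by positivity
  have hinv1 : 1/(l:ℝ) < 1 := by rw [div_lt_one hl0]; exact hl1
  have hα0 : 0 < α := by simp only [hαdef]; linarith
  have hα1 : α < 1 := by simp only [hαdef]; linarith
  set t₀ : ℝ := min η (min ((h*η/C) ^ (1/α)) ((C/h) ^ (l:ℝ))) with ht₀def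
  have ht₀pos : 0 < t₀ :=
    lt_min hη (lt_min (Real.rpow_pos_of_pos (by positivity) _)
      (Real.rpow_pos_of_pos (by positivity) _))
  have ht₀η : t₀ ≤ η := min_le_left _ _
  set c : ℝ := C * t₀ ^ α with hcdef
  have hcpos : 0 < c := by
    have := Real.rpow_pos_of_pos ht₀pos α
    positivity
  set t₁ : ℝ := c / h with ht₁def
  have ht₁pos : 0 < t₁ := by positivity
  -- c ≤ h * η
  have hchη : c ≤ h * η := by
    have h1 : t₀ ≤ (h*η/C) ^ (1/α) := le_trans (min_le_right _ _) (min_le_left _ _)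
    have h2 : t₀ ^ α ≤ ((h*η/C) ^ (1/α)) ^ α :=
      Real.rpow_le_rpow (le_of_lt ht₀pos) h1 (le_of_lt hα0)
    have h3 : ((h*η/C) ^ (1/α)) ^ α = h*η/C := by
      rw [← Real.rpow_mul (by positivity), one_div, inv_mul_cancel₀ (ne_of_gt hα0),
        Real.rpow_one]
    rw [h3] at h2
    calc c = C * t₀ ^ α := hcdef
      _ ≤ C * (h*η/C) := by nlinarith
      _ = h * η := by field_simp
  -- for 0 ≤ t ≤ t₀, h * t ≤ C * t ^ α
  have hlin : ∀ t, 0 ≤ t → t ≤ t₀ → h * t ≤ C * t ^ α := by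
    intro t ht htt
    rcases eq_or_lt_of_le ht with rfl | htpos
    · simp [Real.zero_rpow (ne_of_gt hα0)]
    have h1 : t ≤ (C/h) ^ (l:ℝ) :=
      le_trans htt (le_trans (min_le_right _ _) (min_le_right _ _))
    have h2 : t ^ (1/(l:ℝ)) ≤ ((C/h) ^ (l:ℝ)) ^ (1/(l:ℝ)) :=
      Real.rpow_le_rpow (le_of_lt htpos) h1 (le_of_lt hinv)
    have h3 : ((C/h) ^ (l:ℝ)) ^ (1/(l:ℝ)) = C/h := by
      rw [← Real.rpow_mul (by positivity), mul_one_div, div_self (ne_of_gt hl0),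
        Real.rpow_one]
    rw [h3] at h2
    have h4 : t = t ^ α * t ^ (1/(l:ℝ)) := by
      rw [← Real.rpow_add htpos]
      simp [hαdef]
    have h5 : 0 < t ^ α := Real.rpow_pos_of_pos htpos α
    calc h * t = h * (t ^ α * t ^ (1/(l:ℝ))) := by rw [← h4]
      _ ≤ h * (t ^ α * (C/h)) := by
          have h6 : 0 ≤ t ^ (1/(l:ℝ)) := le_of_lt (Real.rpow_pos_of_pos htpos _)
          gcongr
      _ = C * t ^ α := by field_simp
  -- for 0 ≤ t ≤ t₀, C * t ^ α ≤ c
  have hpow_le : ∀ t, 0 ≤ t → t ≤ t₀ → C * t ^ α ≤ c := by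
    intro t ht htt
    exact mul_le_mul_of_nonneg_left (Real.rpow_le_rpow ht htt (le_of_lt hα0)) (le_of_lt hC)
  -- for t ≥ t₀, c ≤ C * t ^ α
  have hpow_ge : ∀ t, t₀ ≤ t → c ≤ C * t ^ α := by
    intro t htt
    exact mul_le_mul_of_nonneg_left
      (Real.rpow_le_rpow (le_of_lt ht₀pos) htt (le_of_lt hα0)) (le_of_lt hC)
  refine ⟨fun t => max (min (C * t ^ α) c) (h * t), ?_, ?_, ?_, ?_, h, hh, t₁, ht₁pos, ?_⟩
  · -- continuity
    refine ContinuousOn.sup (ContinuousOn.inf ?_ continuousOn_const)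
      ((continuous_const.mul continuous_id).continuousOn)
    exact ContinuousOn.mul continuousOn_const
      (fun t _ => (Real.continuousAt_rpow_const t α (Or.inr (le_of_lt hα0))).continuousWithinAt)
  · -- nonneg
    intro t ht
    exact le_trans (by positivity) (le_max_right _ _)
  · -- f ≤ Φ
    intro t ht
    apply max_le _ (hhb t ht)
    rcases le_or_gt t η with hte | hte
    · exact le_trans (min_le_left _ _) (hΦa t ht hte)
    · refine le_trans (min_le_right _ _) (le_trans hchη (le_trans ?_ (hhb t ht)))
      nlinarith
  · -- limit
    have hev : (fun t => (max (min (C * t ^ α) c) (h * t)) / t ^ α)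
        =ᶠ[𝓝[>] (0:ℝ)] (fun _ => C) := by
      filter_upwards [Ioo_mem_nhdsGT_of_mem (show (0:ℝ) ∈ Ico 0 t₀ from ⟨le_rfl, ht₀pos⟩)]
        with t ht
      have h1 : min (C * t ^ α) c = C * t ^ α :=
        min_eq_left (hpow_le t (le_of_lt ht.1) (le_of_lt ht.2))
      have h2 : max (C * t ^ α) (h * t) = C * t ^ α :=
        max_eq_left (hlin t (le_of_lt ht.1) (le_of_lt ht.2))
      have h5 : (0:ℝ) < t ^ α := Real.rpow_pos_of_pos ht.1 α
      rw [h1, h2, mul_div_assoc, div_self (ne_of_gt h5), mul_one]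
    exact Tendsto.congr' hev.symm tendsto_const_nhds
  · -- linear tail
    intro t htt
    have h1 : c ≤ h * t := by
      have : h * t₁ = c := by rw [ht₁def]; field_simp
      nlinarith
    exact max_eq_right (le_trans (min_le_right _ _) h1)
end
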